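/- If Z ~ BASLG₂(α), then E(Z⁴) = π⁴(196 + 1240π²α² + 889π⁴α⁴)/(7(60 + 40π²α² + 7π⁴α⁴)). -/

import Mathlib

/-!
On `(0, ∞)` the logistic density `e^{-z}/(1 + e^{-z})^2` expands as `∑ (-1)^i (i+1) e^{-(i+1) z}`,
so its Mellin transform at `n + 1` is `n! η(n)`, with `η(n) = (1 - 2^{1-n}) ζ(n)` the alternating
zeta value. The density is even, so its odd moments vanish and its even moments are `2 n! η(n)`.
Since `z⁴ f(z; α)` is `C₂(α)⁻¹ z⁴ (2 - 2αz + α²z²)²` times the density, the fourth moment is a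
combination of the moments of orders `4, …, 8`, which `ζ(4), ζ(6), ζ(8)` determine.
-/

open Real MeasureTheory

noncomputable def C₂ (α : ℝ) : ℝ := (60 + 40 * π ^ 2 * α ^ 2 + 7 * π ^ 4 * α ^ 4) / 15

noncomputable def f (z α : ℝ) : ℝ :=
  ((1 - α * z) ^ 2 + 1) ^ 2 * Real.exp (-z) / (C₂ α * (1 + Real.exp (-z)) ^ 2)

open Set
open scoped Nat

theorem bernoulli'_six : bernoulli' 6 = 1 / 42 := by
  rw [bernoulli'_def]
  norm_num [Finset.sum_range_succ, Nat.choose, bernoulli'_eq_zero_of_odd (by decide : Odd 5)]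

theorem bernoulli'_eight : bernoulli' 8 = -1 / 30 := by
  rw [bernoulli'_def]
  norm_num [Finset.sum_range_succ, Nat.choose, bernoulli'_six,
    bernoulli'_eq_zero_of_odd (by decide : Odd 5), bernoulli'_eq_zero_of_odd (by decide : Odd 7)]

theorem hasSum_zeta_six : HasSum (fun n : ℕ => (1 : ℝ) / (n : ℝ) ^ 6) (π ^ 6 / 945) := by
  convert! hasSum_zeta_nat (k := 3) (by norm_num) using 1
  rw [bernoulli_eq_bernoulli'_of_ne_one (by decide), bernoulli'_six]
  norm_num [Nat.factorial]; ring

theorem hasSum_zeta_eight : HasSum (fun n : ℕ => (1 : ℝ) / (n : ℝ) ^ 8) (π ^ 8 / 9450) := by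
  convert! hasSum_zeta_nat (k := 4) (by norm_num) using 1
  rw [bernoulli_eq_bernoulli'_of_ne_one (by decide), bernoulli'_eight]
  norm_num [Nat.factorial]; ring

theorem hasSum_neg_one_pow_div_succ_pow {m : ℕ} (hm : m ≠ 0) {Z : ℝ}
    (hZ : HasSum (fun n : ℕ => 1 / (n : ℝ) ^ m) Z) :
    HasSum (fun n : ℕ => (-1) ^ n / ((n : ℝ) + 1) ^ m) ((1 - 2 / 2 ^ m) * Z) := by
  -- `1 + (-1)^n` doubles the even terms and kills the odd ones, and `1/(2k)^m = 2^{-m}/k^m`.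
  have hdouble : HasSum (fun n : ℕ => (1 + (-1) ^ n) / (n : ℝ) ^ m) (2 / 2 ^ m * Z + 0) := by
    refine HasSum.even_add_odd ?_ (hasSum_zero.congr_fun fun k => ?_)
    · refine (hZ.mul_left (2 / 2 ^ m)).congr_fun fun k => ?_
      simp only [pow_mul, neg_one_sq, one_pow, Nat.cast_mul, Nat.cast_ofNat, mul_pow]
      ring
    · simp [pow_succ, pow_mul]
  have hsigned := (hdouble.sub hZ).congr_fun fun n : ℕ =>
    show (-1) ^ n / (n : ℝ) ^ m = _ by ring
  have hshift := (hasSum_nat_add_iff' 1).mpr hsigned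
  convert! hshift.neg using 1
  · ext n; push_cast; ring
  · simp only [Finset.range_one, Finset.sum_singleton, pow_zero, Nat.cast_zero, zero_pow hm,
      div_zero, sub_zero]
    ring

noncomputable def logisticDensity (z : ℝ) : ℝ := exp (-z) / (1 + exp (-z)) ^ 2

theorem logisticDensity_nonneg (z : ℝ) : 0 ≤ logisticDensity z := by
  unfold logisticDensity; positivity

theorem continuous_logisticDensity : Continuous logisticDensity :=
  Continuous.div (by fun_prop) (by fun_prop) fun z => by positivity

theorem logisticDensity_neg (z : ℝ) : logisticDensity (-z) = logisticDensity z := by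
  unfold logisticDensity
  rw [neg_neg, exp_neg]
  field_simp
  ring

theorem logisticDensity_abs (z : ℝ) : logisticDensity |z| = logisticDensity z := by
  rcases abs_choice z with h | h <;> simp only [h, logisticDensity_neg]

theorem logisticDensity_le_exp_neg_abs (z : ℝ) : logisticDensity z ≤ exp (-|z|) := by
  rw [← logisticDensity_abs]
  exact div_le_self (exp_nonneg _) (one_le_pow₀ (le_add_of_nonneg_right (exp_nonneg _)))

theorem integrable_comp_abs_of_integrableOn_Ioi {E : Type*} [NormedAddCommGroup E] {F : ℝ → E}
    (hF : IntegrableOn F (Ioi 0)) : Integrable fun x => F |x| := by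
  have hIoi : IntegrableOn (fun x => F |x|) (Ioi 0) :=
    hF.congr_fun (fun x hx => by rw [abs_of_pos hx]) measurableSet_Ioi
  rw [← integrableOn_univ, ← Iic_union_Ioi (a := 0), integrableOn_union]
  refine ⟨?_, hIoi⟩
  have hneg : MeasurableEmbedding fun x : ℝ => -x := (Homeomorph.neg ℝ).measurableEmbedding
  rw [← Measure.map_neg_eq_self (volume : Measure ℝ), hneg.integrableOn_map_iff]
  simp_rw [Function.comp_def, abs_neg, neg_preimage, neg_Iic, neg_zero]
  exact (integrableOn_Ici_iff_integrableOn_Ioi).mpr hIoi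

theorem integrable_pow_mul_logisticDensity (n : ℕ) :
    Integrable fun z => z ^ n * logisticDensity z := by
  have hdom : IntegrableOn (fun x : ℝ => x ^ n * exp (-x)) (Ioi 0) := by
    refine (GammaIntegral_convergent (s := n + 1) (by positivity)).congr_fun
      (fun x _ => ?_) measurableSet_Ioi
    dsimp only
    rw [add_sub_cancel_right, rpow_natCast, mul_comm]
  refine (integrable_comp_abs_of_integrableOn_Ioi hdom).mono'
    ((continuous_pow n).mul continuous_logisticDensity).aestronglyMeasurable
    (Filter.Eventually.of_forall fun z => ?_)
  rw [norm_mul, norm_pow, Real.norm_eq_abs, Real.norm_of_nonneg (logisticDensity_nonneg z)]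
  exact mul_le_mul_of_nonneg_left (logisticDensity_le_exp_neg_abs z) (by positivity)

theorem integral_pow_mul_logisticDensity_of_odd {n : ℕ} (hn : Odd n) :
    ∫ z, z ^ n * logisticDensity z = 0 := by
  have h := integral_neg_eq_self (fun z => z ^ n * logisticDensity z) volume
  simp only [hn.neg_pow, logisticDensity_neg, neg_mul, integral_neg] at h
  linarith

theorem hasSum_logisticDensity {t : ℝ} (ht : 0 < t) :
    HasSum (fun i : ℕ => (-1) ^ i * ((i : ℝ) + 1) * rexp (-((i : ℝ) + 1) * t))
      (logisticDensity t) := by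
  set x := rexp (-t)
  have hx : ‖-x‖ < 1 := by
    rw [norm_neg, Real.norm_of_nonneg (exp_nonneg _), Real.exp_lt_one_iff]; linarith
  have h := (hasSum_choose_mul_geometric_of_norm_lt_one 1 hx).mul_left x
  convert! h using 1
  · ext i
    rw [show -((i : ℝ) + 1) * t = ((i + 1 : ℕ) : ℝ) * -t by push_cast; ring, exp_nat_mul,
      neg_pow, Nat.choose_one_right, pow_succ]
    push_cast
    ring
  · simp [logisticDensity, x, div_eq_mul_inv]

theorem hasSum_integral_Ioi_pow_mul_logisticDensity {n : ℕ} (hn : 2 ≤ n) :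
    HasSum (fun i : ℕ => n ! * ((-1) ^ i / ((i : ℝ) + 1) ^ n))
      (∫ t in Ioi 0, t ^ n * logisticDensity t) := by
  have hs : (n : ℂ) + 1 = ((n + 1 : ℕ) : ℂ) := by push_cast; ring
  have h := hasSum_mellin (a := fun i : ℕ => (((-1) ^ i * ((i : ℝ) + 1) : ℝ) : ℂ))
    (p := fun i => (i : ℝ) + 1) (F := fun t => (logisticDensity t : ℂ)) (s := (n : ℂ) + 1)
    (fun i => Or.inr (by positivity))
    (by simp only [Complex.add_re, Complex.natCast_re, Complex.one_re]; positivity)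
    (fun t ht => by
      simpa using (Complex.hasSum_ofReal.mpr (hasSum_logisticDensity ht)))
    ?_
  · rw [← Complex.hasSum_ofReal]
    convert! h using 1
    · ext i
      rw [Complex.Gamma_nat_eq_factorial, hs, Complex.cpow_natCast]
      have : (i : ℂ) + 1 ≠ 0 := by exact_mod_cast (Nat.succ_ne_zero i)
      push_cast
      field_simp
      ring
    · rw [mellin, ← integral_complex_ofReal]
      congr 1 with t
      rw [add_sub_cancel_right, Complex.cpow_natCast, smul_eq_mul]
      push_cast; ring
  · refine ((summable_nat_add_iff 1).mpr (Real.summable_one_div_nat_pow.mpr hn)).congr fun i => ?_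
    have hi : (0 : ℝ) < i + 1 := by positivity
    simp only [Complex.norm_real, norm_mul, norm_pow, norm_neg, norm_one, one_pow, one_mul,
      Real.norm_of_nonneg hi.le, Complex.add_re, Complex.natCast_re, Complex.one_re]
    rw [Real.rpow_add_one hi.ne', Real.rpow_natCast]
    push_cast
    field_simp

theorem integral_pow_mul_logisticDensity_of_even {n : ℕ} (hn : 2 ≤ n) (he : Even n) {Z : ℝ}
    (hZ : HasSum (fun k : ℕ => 1 / (k : ℝ) ^ n) Z) :
    ∫ z, z ^ n * logisticDensity z = 2 * n ! * (1 - 2 / 2 ^ n) * Z := by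
  have hIoi := (hasSum_integral_Ioi_pow_mul_logisticDensity hn).unique
    ((hasSum_neg_one_pow_div_succ_pow (by omega) hZ).mul_left (n ! : ℝ))
  have heven : (fun z : ℝ => z ^ n * logisticDensity z) =
      fun z => |z| ^ n * logisticDensity |z| := by
    ext z; rw [he.pow_abs, logisticDensity_abs]
  rw [heven, integral_comp_abs (f := fun z => z ^ n * logisticDensity z), hIoi]
  ring

theorem f_eq_mul_logisticDensity (z α : ℝ) :
    f z α = (C₂ α)⁻¹ * (((1 - α * z) ^ 2 + 1) ^ 2 * logisticDensity z) := by
  simp only [f, logisticDensity, div_eq_mul_inv, mul_inv]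
  ring

theorem BASLG2_fourth_moment (α : ℝ) :
    ∫ z : ℝ, z ^ 4 * f z α
      = π ^ 4 * (196 + 1240 * π ^ 2 * α ^ 2 + 889 * π ^ 4 * α ^ 4)
        / (7 * (60 + 40 * π ^ 2 * α ^ 2 + 7 * π ^ 4 * α ^ 4)) := by
  have hexpand : (fun z => z ^ 4 * f z α) = fun z => (C₂ α)⁻¹ *
      ∑ k : Fin 5, ![4, -8 * α, 8 * α ^ 2, -4 * α ^ 3, α ^ 4] k *
        (z ^ (k + 4 : ℕ) * logisticDensity z) := by
    ext z
    simp only [f_eq_mul_logisticDensity, Fin.sum_univ_five, Matrix.cons_val, Fin.isValue,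
      Fin.coe_ofNat_eq_mod, Nat.reduceMod]
    ring
  rw [hexpand, integral_const_mul, integral_finsetSum _ fun k _ =>
    (integrable_pow_mul_logisticDensity _).const_mul _]
  simp only [integral_const_mul, Fin.sum_univ_five, Matrix.cons_val, Fin.isValue,
    Fin.coe_ofNat_eq_mod, Nat.reduceMod, Nat.reduceAdd,
    integral_pow_mul_logisticDensity_of_even (n := 4) (by norm_num) (by decide) hasSum_zeta_four,
    integral_pow_mul_logisticDensity_of_even (n := 6) (by norm_num) (by decide) hasSum_zeta_six,
    integral_pow_mul_logisticDensity_of_even (n := 8) (by norm_num) (by decide) hasSum_zeta_eight,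
    integral_pow_mul_logisticDensity_of_odd (n := 5) (by decide),
    integral_pow_mul_logisticDensity_of_odd (n := 7) (by decide)]
  rw [C₂]
  field_simp
  ring
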